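/- Let W = ⟨S|M⟩ be a right-angled finite rank Coxeter system, let x = (x_1,…,x_n) ∈ [0,∞)^n, and suppose ψ_x is proper. Then the following are equivalent: (a) for all u, w ∈ S the function γ_{u,w}^{ψ_x} has finite support; (b) there do not exist generators r, s, t ∈ S with m_{r,s} = m_{r,t} = 2, m_{s,t} = ∞, and ψ_x(r) > 0. -/

import Mathlib

/-!
Right multiplication by `s_w` changes `ψ_x` by `+x_w` or `-x_w`, according to whether `w` is a
right descent. By the exchange condition, `w` is a right descent of `v` if and only if it is one
of `s_u v`, unless `s_u v = v s_w`. Hence `γ_{u,w}(v) ≠ 0` exactly when `s_u v = v s_w` and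
`x_w ≠ 0`, so the support of `γ_{u,w}` is empty or a coset of the centralizer of `s_w`.

In a right-angled group this centralizer is generated by `s_w` and the `s_p` with `m_{w,p} = 2`:
a right descent `i ≠ w` of `v` is, together with `w`, a right descent of `v s_w`, and two right
descents commute. If these `s_p` pairwise commute, the centralizer consists of products of
distinct generators and is finite. If `m_{p,q} = ∞` for two of them, the powers of `s_p s_q`
centralize `s_w` and are pairwise distinct, as they map to the rotations of the infinite dihedral
group.
-/

open CoxeterSystem

/-- The function `γ_{u,w}^ψ(v) = ψ(uvw) + ψ(v) − ψ(uv) − ψ(vw)`. -/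
def gammaFun {W : Type*} [Group W] (ψ : W → ℝ) (u w v : W) : ℝ :=
  ψ (u * v * w) + ψ v - ψ (u * v) - ψ (v * w)

theorem gammaFun_of_mul_eq_mul {W : Type*} [Group W] (ψ : W → ℝ) {a b v : W}
    (h : a * v = v * b) (hb : b * b = 1) : gammaFun ψ a b v = 2 * (ψ v - ψ (v * b)) := by
  rw [gammaFun, h, mul_assoc, hb, mul_one]
  ring

def CoxeterMatrix.IsRightAngled {B : Type*} (M : CoxeterMatrix B) : Prop :=
  ∀ i j, i ≠ j → M i j = 2 ∨ M i j = 0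

theorem CoxeterMatrix.IsRightAngled.isLiftable {B : Type*} {M : CoxeterMatrix B}
    (hM : M.IsRightAngled) {G : Type*} [Monoid G] {f : B → G} (hsq : ∀ i, f i * f i = 1)
    (hcomm : ∀ i j, M i j = 2 → Commute (f i) (f j)) : M.IsLiftable f := by
  intro i j
  by_cases hij : i = j
  · rw [hij, M.diagonal, pow_one, hsq]
  rcases hM i j hij with h | h
  · rw [h, sq, (hcomm i j h).symm.mul_mul_mul_comm, hsq, hsq, one_mul]
  · rw [h, pow_zero]

open DihedralGroup in
/-- Word length in `DihedralGroup 0` with respect to the reflections `sr 0` and `sr 1`. -/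
def infDihedralLength : DihedralGroup 0 → ℕ
  | r i => (2 * i).natAbs
  | sr i => (2 * i - 1).natAbs

open DihedralGroup in
theorem infDihedralLength_mul_le {c : DihedralGroup 0} (hc : c = 1 ∨ c = sr 0 ∨ c = sr 1)
    (g : DihedralGroup 0) : infDihedralLength (c * g) ≤ infDihedralLength g + 1 := by
  rcases hc with rfl | rfl | rfl <;> cases g <;> simp [infDihedralLength, sr_mul_r, sr_mul_sr] <;>
    omega

namespace CoxeterSystem

variable {B : Type*} {M : CoxeterMatrix B} {W : Type*} [Group W] (cs : CoxeterSystem M W)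

local prefix:100 "s" => cs.simple
local prefix:100 "π" => cs.wordProd
local prefix:100 "ℓ" => cs.length
local prefix:100 "ris" => cs.rightInvSeq

theorem commute_simple_of_eq_two {i j : B} (h : M i j = 2) : Commute (s i) (s j) := by
  have h2 := cs.simple_mul_simple_pow i j
  rw [h, sq, mul_eq_one_iff_eq_inv, mul_inv_rev, inv_simple, inv_simple] at h2
  exact h2

section TitsRepresentation

variable [DecidableEq W]

/-- Tits' construction: `W` acts on pairs (reflection, sign), the sign recording the parity of the
occurrences of the reflection in the right inversion sequence (see `titsHom_wordProd`). -/
def titsPerm (i : B) : Equiv.Perm (W × ZMod 2) :=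
  Function.Involutive.toPerm (fun p => (s i * p.1 * s i, p.2 + if p.1 = s i then 1 else 0)) <| by
    rintro ⟨t, ε⟩
    have h11 : (1 + 1 : ZMod 2) = 0 := rfl
    by_cases ht : t = s i <;> simp [ht, mul_assoc, add_assoc, h11, mul_eq_one_iff_eq_inv]

theorem titsPerm_apply (i : B) (t : W) (ε : ZMod 2) :
    cs.titsPerm i (t, ε) = (s i * t * s i, ε + if t = s i then 1 else 0) := rfl

theorem titsPerm_mul_self (i : B) : cs.titsPerm i * cs.titsPerm i = 1 :=
  Equiv.ext (Function.Involutive.toPerm_involutive _)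

theorem commute_titsPerm {i j : B} (h : Commute (s i) (s j)) :
    Commute (cs.titsPerm i) (cs.titsPerm j) := by
  have hconj : ∀ {a b : B}, Commute (s a) (s b) → ∀ t : W,
      (s a * t * s a = s b ↔ t = s b) := by
    intro a b hab t
    have hb : s b = s a * s b * s a := by rw [hab.eq, mul_assoc, simple_mul_simple_self, mul_one]
    rw [hb, mul_left_inj, mul_right_inj, ← hb]
  ext ⟨t, ε⟩
  · simp only [Equiv.Perm.mul_apply, titsPerm_apply]
    calc s i * (s j * t * s j) * s i = (s i * s j) * t * (s j * s i) := by group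
      _ = (s j * s i) * t * (s i * s j) := by rw [h.eq]
      _ = s j * (s i * t * s i) * s j := by group
  · simp only [Equiv.Perm.mul_apply, titsPerm_apply, hconj h, hconj h.symm]
    ring

noncomputable def titsHom (hM : M.IsRightAngled) : W →* Equiv.Perm (W × ZMod 2) :=
  cs.lift ⟨cs.titsPerm, hM.isLiftable cs.titsPerm_mul_self
    fun _ _ h => cs.commute_titsPerm (cs.commute_simple_of_eq_two h)⟩

theorem titsHom_wordProd (hM : M.IsRightAngled) (ω : List B) (t : W) (ε : ZMod 2) :
    cs.titsHom hM (π ω) (t, ε) = (π ω * t * (π ω)⁻¹, ε + (ris ω).count t) := by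
  induction ω with
  | nil => simp
  | cons i ω ih =>
    rw [wordProd_cons, map_mul, Equiv.Perm.mul_apply, ih, titsHom, lift_apply_simple,
      titsPerm_apply]
    have hc : (π ω)⁻¹ * s i * π ω = t ↔ π ω * t * (π ω)⁻¹ = s i := by
      constructor <;> intro h <;> rw [← h] <;> group
    refine Prod.ext ?_ ?_
    · simp only [mul_inv_rev, inv_simple]
      group
    · simp only [rightInvSeq, List.count_cons, beq_iff_eq, hc]
      push_cast
      ring

theorem cast_count_rightInvSeq_eq (hM : M.IsRightAngled) {ω ω' : List B} (h : π ω = π ω')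
    (t : W) : ((ris ω).count t : ZMod 2) = (ris ω').count t := by
  have h1 := cs.titsHom_wordProd hM ω t 0
  rw [h, cs.titsHom_wordProd hM ω' t 0, Prod.mk.injEq] at h1
  simpa using h1.2.symm

end TitsRepresentation

theorem exists_eraseIdx_of_isRightDescent (hM : M.IsRightAngled) {ω : List B}
    {i : B} (hi : cs.IsRightDescent (π ω) i) :
    ∃ j < ω.length, π ω * s i = π (ω.eraseIdx j) := by
  classical
  obtain ⟨ω', hω', hω'prod⟩ := cs.exists_isReduced (π ω * s i)
  have hprod : π (ω'.concat i) = π ω := by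
    rw [wordProd_concat, ← hω'prod, simple_mul_simple_cancel_right]
  have hred : cs.IsReduced (ω'.concat i) := by
    rw [IsReduced, hprod, List.length_concat, ← hω'.eq, ← hω'prod,
      cs.isRightDescent_iff.mp hi]
  have hmem : s i ∈ ris ω := by
    have h1 : (ris (ω'.concat i)).count (s i) = 1 :=
      List.count_eq_one_of_mem hred.nodup_rightInvSeq (by rw [rightInvSeq_concat]; simp)
    have h2 := cs.cast_count_rightInvSeq_eq hM hprod (s i)
    rw [h1] at h2
    by_contra h
    rw [List.count_eq_zero_of_not_mem h] at h2
    exact absurd h2 (by decide)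
  obtain ⟨j, hj, hget⟩ := List.mem_iff_getElem.mp hmem
  refine ⟨j, by simpa using hj, ?_⟩
  rw [← wordProd_mul_getD_rightInvSeq, List.getD_eq_getElem _ _ hj, hget]

theorem simple_mul_eq_mul_simple_of_isRightDescent (hM : M.IsRightAngled) {u w : B} {v : W}
    (hv : cs.IsRightDescent v w) (huv : ¬cs.IsRightDescent (s u * v) w) :
    s u * v = v * s w := by
  obtain ⟨ω, hω, hωprod⟩ := cs.exists_isReduced (s u * v)
  have hv' : v = π (u :: ω) := by rw [wordProd_cons, ← hωprod, simple_mul_simple_cancel_left]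
  obtain ⟨_ | j, hj, hjprod⟩ :=
    cs.exists_eraseIdx_of_isRightDescent hM (ω := u :: ω) (by rwa [← hv'])
  · rw [List.eraseIdx_cons_zero, ← hωprod, ← hv'] at hjprod
    exact hjprod.symm
  · rw [← hv', List.eraseIdx_cons_succ, wordProd_cons] at hjprod
    have hshort : s u * v * s w = π (ω.eraseIdx j) := by
      rw [mul_assoc, hjprod, simple_mul_simple_cancel_left]
    have h1 := cs.length_wordProd_le (ω.eraseIdx j)
    have h2 := List.length_eraseIdx_add_one (l := ω) (i := j) (by simpa using hj)
    have h3 : ℓ (s u * v * s w) = ω.length + 1 := by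
      rw [cs.not_isRightDescent_iff.mp huv, hωprod, hω.eq]
    rw [← hshort] at h1
    omega

theorem isRightDescent_simple_mul_iff (hM : M.IsRightAngled) {u w : B} {v : W}
    (hne : s u * v ≠ v * s w) : cs.IsRightDescent (s u * v) w ↔ cs.IsRightDescent v w := by
  refine ⟨fun huv => by_contra fun hv => hne ?_, fun hv => by_contra fun huv =>
    hne (cs.simple_mul_eq_mul_simple_of_isRightDescent hM hv huv)⟩
  have h := cs.simple_mul_eq_mul_simple_of_isRightDescent hM huv
    (by rwa [simple_mul_simple_cancel_left])
  rw [simple_mul_simple_cancel_left] at h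
  nth_rw 2 [h]
  rw [simple_mul_simple_cancel_right]

section InfiniteDihedral

open DihedralGroup

variable [DecidableEq B]

noncomputable def toInfDihedral (hM : M.IsRightAngled) {a b : B} (hab : M a b = 0) :
    W →* DihedralGroup 0 :=
  cs.lift ⟨fun i => if i = a then sr 0 else if i = b then sr 1 else 1,
    hM.isLiftable (fun i => by split_ifs <;> simp) fun i j h => by
      split_ifs <;> subst_vars <;> simp_all [M.symmetric]⟩

theorem toInfDihedral_simple (hM : M.IsRightAngled) {a b : B} (hab : M a b = 0) (i : B) :
    cs.toInfDihedral hM hab (s i) = if i = a then sr 0 else if i = b then sr 1 else 1 :=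
  cs.lift_apply_simple _ i

theorem infDihedralLength_toInfDihedral_wordProd_le
    (hM : M.IsRightAngled) {a b : B} (hab : M a b = 0) (ω : List B) :
    infDihedralLength (cs.toInfDihedral hM hab (π ω)) ≤ ω.length := by
  induction ω with
  | nil => exact Nat.le_of_eq (by rw [wordProd_nil, map_one]; rfl)
  | cons i ω ih =>
    rw [wordProd_cons, map_mul, List.length_cons, toInfDihedral_simple]
    refine (infDihedralLength_mul_le ?_ _).trans (by omega)
    split_ifs <;> simp

theorem infDihedralLength_toInfDihedral_alternatingWord
    (hM : M.IsRightAngled) {a b : B} (hab : M a b = 0) (k : ℕ) :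
    infDihedralLength (cs.toInfDihedral hM hab (π (alternatingWord a b k))) = k := by
  have hba : b ≠ a := by
    rintro rfl
    simp at hab
  have hcast : ((k / 2 : ℕ) : ZMod 0) = ((k / 2 : ℕ) : ℤ) := rfl
  rw [prod_alternatingWord_eq_mul_pow, map_mul, map_pow, map_mul, toInfDihedral_simple,
    toInfDihedral_simple, if_pos rfl, if_neg hba, if_pos rfl, sr_mul_sr, sub_zero, r_one_pow]
  split_ifs with hk
  · rw [map_one, one_mul]
    simp only [infDihedralLength, hcast]
    obtain ⟨m, rfl⟩ := hk
    omega
  · rw [toInfDihedral_simple, if_neg hba, if_pos rfl, sr_mul_r]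
    simp only [infDihedralLength, hcast]
    obtain ⟨m, rfl⟩ := Nat.not_even_iff_odd.mp hk
    omega

theorem isReduced_alternatingWord (hM : M.IsRightAngled) {a b : B} (hab : M a b = 0) (k : ℕ) :
    cs.IsReduced (alternatingWord a b k) := by
  obtain ⟨ω, hω, hωprod⟩ := cs.exists_isReduced (π (alternatingWord a b k))
  refine le_antisymm (cs.length_wordProd_le _) ?_
  calc (alternatingWord a b k).length
      = infDihedralLength (cs.toInfDihedral hM hab (π (alternatingWord a b k))) := by
        rw [length_alternatingWord, infDihedralLength_toInfDihedral_alternatingWord]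
    _ ≤ ω.length := hωprod ▸ cs.infDihedralLength_toInfDihedral_wordProd_le hM hab ω
    _ = ℓ (π (alternatingWord a b k)) := by rw [hωprod, hω.eq]

theorem injective_pow_simple_mul_simple (hM : M.IsRightAngled) {a b : B} (hab : M a b = 0) :
    Function.Injective fun n : ℕ => (s a * s b) ^ n := by
  have hba : b ≠ a := by
    rintro rfl
    simp at hab
  rw [injective_pow_iff_not_isOfFinOrder, ← orderOf_eq_zero_iff]
  have h := orderOf_map_dvd (cs.toInfDihedral hM hab) (s a * s b)
  rwa [map_mul, toInfDihedral_simple, toInfDihedral_simple, if_pos rfl, if_neg hba, if_pos rfl,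
    sr_mul_sr, sub_zero, orderOf_r_one, zero_dvd_iff] at h

end InfiniteDihedral

section TwoDescents

variable [DecidableEq B]

theorem exists_eq_mul_alternatingWord_succ (hM : M.IsRightAngled) {a b : B} (hab : M a b = 0)
    {y z : W} {k : ℕ} (hb : cs.IsRightDescent y b) (hy : y = z * π (alternatingWord b a k))
    (hlen : ℓ z + k = ℓ y) :
    ∃ z', y = z' * π (alternatingWord a b (k + 1)) ∧ ℓ z' + (k + 1) = ℓ y := by
  obtain ⟨ωz, hωz, rfl⟩ := cs.exists_isReduced z
  have hα := length_alternatingWord b a k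
  obtain ⟨j, hj, hjprod⟩ := cs.exists_eraseIdx_of_isRightDescent hM
    (ω := ωz ++ alternatingWord b a k) (by rwa [wordProd_append, ← hy])
  rw [wordProd_append, ← hy] at hjprod
  rcases lt_or_ge j ωz.length with hjz | hjz
  · rw [List.eraseIdx_append_of_lt_length hjz, wordProd_append] at hjprod
    have hy' : y = π (ωz.eraseIdx j) * π (alternatingWord a b (k + 1)) := by
      rw [alternatingWord_succ, wordProd_concat, ← mul_assoc, ← hjprod,
        simple_mul_simple_cancel_right]
    refine ⟨_, hy', ?_⟩
    have h1 := List.length_eraseIdx_add_one hjz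
    have h2 := cs.length_wordProd_le (ωz.eraseIdx j)
    have h3 := cs.length_wordProd_le (alternatingWord a b (k + 1))
    have h4 := hy' ▸ cs.length_mul_le (π (ωz.eraseIdx j)) (π (alternatingWord a b (k + 1)))
    rw [length_alternatingWord] at h3
    rw [hωz.eq] at hlen
    omega
  · exfalso
    rw [List.eraseIdx_append_of_length_le hjz, wordProd_append, hy, mul_assoc] at hjprod
    have hshort := mul_left_cancel hjprod
    rw [← wordProd_concat, ← alternatingWord_succ] at hshort
    have h1 := cs.isReduced_alternatingWord hM hab (k + 1)
    have h2 := List.length_eraseIdx_add_one (l := alternatingWord b a k)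
      (i := j - ωz.length) (by simp at hj; omega)
    have h3 := cs.length_wordProd_le ((alternatingWord b a k).eraseIdx (j - ωz.length))
    rw [IsReduced, hshort, length_alternatingWord] at h1
    omega

theorem exists_eq_mul_alternatingWord (hM : M.IsRightAngled) {y : W} (k : ℕ) :
    ∀ {a b : B}, M a b = 0 → cs.IsRightDescent y a → cs.IsRightDescent y b →
      ∃ z, y = z * π (alternatingWord a b k) ∧ ℓ z + k = ℓ y := by
  induction k with
  | zero => exact fun _ _ _ => ⟨y, by simp [alternatingWord], by simp⟩
  | succ k ih =>
    intro a b hab ha hb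
    obtain ⟨z, hy, hlen⟩ := ih (by rwa [M.symmetric]) hb ha
    exact cs.exists_eq_mul_alternatingWord_succ hM hab hb hy hlen

end TwoDescents

/-- If `M a b = 0`, peeling `a` and `b` off `y` alternately from the right would give it an
alternating suffix of length `ℓ y + 1`. -/
theorem eq_two_of_isRightDescent (hM : M.IsRightAngled) {y : W} {a b : B} (hab : a ≠ b)
    (ha : cs.IsRightDescent y a) (hb : cs.IsRightDescent y b) : M a b = 2 := by
  classical
  refine (hM a b hab).resolve_right fun h0 => ?_
  obtain ⟨z, -, hlen⟩ := cs.exists_eq_mul_alternatingWord hM (ℓ y + 1) h0 ha hb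
  omega

theorem exists_isRightDescent_of_commute (hM : M.IsRightAngled) {w : B} {v : W}
    (hv : Commute (s w) v) (hv1 : v ≠ 1) :
    ∃ i, (i = w ∨ M w i = 2) ∧ cs.IsRightDescent v i := by
  by_cases hw : cs.IsRightDescent v w
  · exact ⟨w, Or.inl rfl, hw⟩
  obtain ⟨i, hi⟩ := cs.exists_rightDescent_of_ne_one hv1
  refine ⟨i, Or.inr (cs.eq_two_of_isRightDescent hM (y := v * s w) ?_ ?_ ?_), hi⟩
  · rintro rfl
    exact hw hi
  · rwa [cs.isRightDescent_iff_not_isRightDescent_mul, simple_mul_simple_cancel_right]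
  · have h1 := cs.length_mul_le (s w) (v * s i)
    have h2 := cs.isRightDescent_iff.mp hi
    have h3 := cs.not_isRightDescent_iff.mp hw
    rw [length_simple, ← mul_assoc, hv.eq] at h1
    rw [IsRightDescent]
    omega

theorem exists_wordProd_eq_of_commute (hM : M.IsRightAngled) {w : B} {v : W}
    (hv : Commute (s w) v) :
    ∃ ω : List B, (∀ i ∈ ω, i = w ∨ M w i = 2) ∧ π ω = v := by
  induction hn : ℓ v using Nat.strong_induction_on generalizing v with
  | _ n ih =>
  by_cases hv1 : v = 1
  · exact ⟨[], by simp, by simp [hv1]⟩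
  obtain ⟨i, hi, hvi⟩ := cs.exists_isRightDescent_of_commute hM hv hv1
  have hcomm : Commute (s w) (v * s i) := by
    refine hv.mul_right ?_
    rcases hi with rfl | hi
    · exact Commute.refl _
    · exact cs.commute_simple_of_eq_two hi
  obtain ⟨ω, hω, hωprod⟩ := ih _ (hn ▸ hvi) hcomm rfl
  refine ⟨ω.concat i, fun j hj => ?_, ?_⟩
  · rcases List.mem_append.mp (List.concat_eq_append ▸ hj) with hj | hj
    · exact hω j hj
    · rw [List.mem_singleton.mp hj]
      exact hi
  · rw [wordProd_concat, hωprod, simple_mul_simple_cancel_right]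

section Centralizer

variable [DecidableEq B]

theorem wordProd_eq_simple_mul_wordProd_erase {ω : List B} {i : B} (hi : i ∈ ω)
    (hω : ∀ j ∈ ω, Commute (s i) (s j)) : π ω = s i * π (ω.erase i) := by
  induction ω with
  | nil => simp at hi
  | cons j ω ih =>
    by_cases hij : j = i
    · rw [hij, List.erase_cons_head, wordProd_cons]
    · have hi' : i ∈ ω := (List.mem_cons.mp hi).resolve_left (Ne.symm hij)
      rw [List.erase_cons_tail (by simpa using hij), wordProd_cons, wordProd_cons,
        ih hi' fun k hk => hω k (List.mem_cons_of_mem j hk), ← mul_assoc, ← mul_assoc,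
        (hω j List.mem_cons_self).eq]

theorem exists_nodup_wordProd_eq (ω : List B)
    (hω : ∀ i ∈ ω, ∀ j ∈ ω, Commute (s i) (s j)) :
    ∃ ω' : List B, ω'.Nodup ∧ ω' ⊆ ω ∧ π ω' = π ω := by
  induction ω with
  | nil => exact ⟨[], List.nodup_nil, List.Subset.refl _, rfl⟩
  | cons i ω ih =>
    obtain ⟨ω', hnd, hsub, hprod⟩ :=
      ih fun j hj k hk => hω j (List.mem_cons_of_mem i hj) k (List.mem_cons_of_mem i hk)
    by_cases hi : i ∈ ω'
    · refine ⟨ω'.erase i, hnd.erase i,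
        fun j hj => List.mem_cons_of_mem i (hsub (List.mem_of_mem_erase hj)), ?_⟩
      rw [wordProd_cons, ← hprod, cs.wordProd_eq_simple_mul_wordProd_erase hi
        fun j hj => hω i List.mem_cons_self j (List.mem_cons_of_mem i (hsub hj)),
        simple_mul_simple_cancel_left]
    · exact ⟨i :: ω', List.nodup_cons.mpr ⟨hi, hnd⟩, List.cons_subset_cons i hsub,
        by rw [wordProd_cons, wordProd_cons, hprod]⟩

end Centralizer

theorem finite_setOf_commute_simple [Finite B] (hM : M.IsRightAngled) {w : B}
    (hlink : ∀ p q, M w p = 2 → M w q = 2 → p ≠ q → M p q = 2) :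
    {v : W | Commute (s w) v}.Finite := by
  classical
  have := Fintype.ofFinite B
  refine (Set.finite_range fun ω : {ω : List B // ω.Nodup} => π ω.1).subset fun v hv => ?_
  obtain ⟨ω, hω, rfl⟩ := cs.exists_wordProd_eq_of_commute hM hv
  obtain ⟨ω', hnd, -, hprod⟩ := cs.exists_nodup_wordProd_eq ω fun i hi j hj => by
    by_cases hij : i = j
    · rw [hij]
    obtain rfl | hi := hω i hi <;> obtain rfl | hj := hω j hj
    · exact absurd rfl hij
    · exact cs.commute_simple_of_eq_two hj
    · exact (cs.commute_simple_of_eq_two hi).symm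
    · exact cs.commute_simple_of_eq_two (hlink i j hi hj hij)
  exact ⟨⟨ω', hnd⟩, hprod⟩

theorem finite_setOf_simple_mul_eq_mul_simple [Finite B] (hM : M.IsRightAngled) {u w : B}
    (hlink : ∀ p q, M w p = 2 → M w q = 2 → p ≠ q → M p q = 2) :
    {v : W | s u * v = v * s w}.Finite := by
  rcases Set.eq_empty_or_nonempty {v : W | s u * v = v * s w} with h | ⟨v₀, hv₀⟩
  · rw [h]
    exact Set.finite_empty
  refine ((cs.finite_setOf_commute_simple hM hlink).image (v₀ * ·)).subset fun v hv =>
    ⟨v₀⁻¹ * v, ?_, mul_inv_cancel_left v₀ v⟩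
  have hw : s w = v₀⁻¹ * (s u * v₀) := by
    rw [show s u * v₀ = v₀ * s w from hv₀, inv_mul_cancel_left]
  calc s w * (v₀⁻¹ * v) = v₀⁻¹ * (s u * v) := by rw [hw]; group
    _ = v₀⁻¹ * v * s w := by rw [show s u * v = v * s w from hv, mul_assoc]

section WeightedLength

variable [Fintype B] [DecidableEq B]

def IsWeightedLength (x : B → ℝ) (ψ : W → ℝ) : Prop :=
  ∀ ω : List B, cs.IsReduced ω → ψ (π ω) = ∑ i, x i * (ω.count i : ℝ)

variable {cs} {x : B → ℝ} {ψ : W → ℝ}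

theorem IsWeightedLength.apply_mul_simple (hψ : cs.IsWeightedLength x ψ) {v : W} {i : B}
    (hv : ¬cs.IsRightDescent v i) : ψ (v * s i) = ψ v + x i := by
  obtain ⟨ω, hω, rfl⟩ := cs.exists_isReduced v
  have hred : cs.IsReduced (ω.concat i) := by
    rw [IsReduced, wordProd_concat, cs.not_isRightDescent_iff.mp hv, hω.eq, List.length_concat]
  rw [← wordProd_concat, hψ _ hred, hψ _ hω, List.concat_eq_append]
  simp only [List.count_append, List.count_singleton, beq_iff_eq, Nat.cast_add, mul_add,
    Finset.sum_add_distrib]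
  simp

theorem IsWeightedLength.apply_mul_simple_of_isRightDescent (hψ : cs.IsWeightedLength x ψ)
    {v : W} {i : B} (hv : cs.IsRightDescent v i) : ψ (v * s i) = ψ v - x i := by
  have := hψ.apply_mul_simple (cs.isRightDescent_iff_not_isRightDescent_mul.mp hv)
  rw [simple_mul_simple_cancel_right] at this
  linarith

theorem IsWeightedLength.apply_simple (hψ : cs.IsWeightedLength x ψ) (i : B) :
    ψ (s i) = x i := by
  have h1 : ψ 1 = 0 := by simpa using hψ [] (by simp [IsReduced])
  simpa [h1] using hψ.apply_mul_simple (cs.not_isRightDescent_one i)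

theorem IsWeightedLength.gammaFun_simple_eq_zero (hM : M.IsRightAngled)
    (hψ : cs.IsWeightedLength x ψ) {u w : B} {v : W} (hne : s u * v ≠ v * s w) :
    gammaFun ψ (s u) (s w) v = 0 := by
  have h := cs.isRightDescent_simple_mul_iff hM hne
  unfold gammaFun
  by_cases hv : cs.IsRightDescent v w
  · rw [hψ.apply_mul_simple_of_isRightDescent hv,
      hψ.apply_mul_simple_of_isRightDescent (h.mpr hv)]
    ring
  · rw [hψ.apply_mul_simple hv, hψ.apply_mul_simple (h.not.mpr hv)]
    ring

theorem IsWeightedLength.gammaFun_simple_ne_zero_iff (hM : M.IsRightAngled)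
    (hψ : cs.IsWeightedLength x ψ) {u w : B} {v : W} :
    gammaFun ψ (s u) (s w) v ≠ 0 ↔ s u * v = v * s w ∧ x w ≠ 0 := by
  by_cases he : s u * v = v * s w
  · rw [gammaFun_of_mul_eq_mul ψ he (cs.simple_mul_simple_self w)]
    by_cases hv : cs.IsRightDescent v w
    · simp [he, hψ.apply_mul_simple_of_isRightDescent hv]
    · simp [he, hψ.apply_mul_simple hv]
  · simp [he, hψ.gammaFun_simple_eq_zero hM he]

end WeightedLength

end CoxeterSystem

theorem rightAngled_gamma_finite_support_iff_general
    {B : Type*} [Fintype B] [DecidableEq B] {M : CoxeterMatrix B}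
    {W : Type*} [Group W] (cs : CoxeterSystem M W)
    (hra : ∀ i j : B, i ≠ j → M i j = 2 ∨ M i j = 0)
    (x : B → ℝ) (hx : ∀ i : B, 0 ≤ x i)
    (ψ : W → ℝ)
    (hψ : ∀ ω : List B, cs.IsReduced ω →
      ψ (cs.wordProd ω) = ∑ i : B, x i * (ω.count i : ℝ)) :
    (∀ u w : B,
        (Function.support (gammaFun ψ (cs.simple u) (cs.simple w))).Finite) ↔
      ¬ ∃ r s t : B, M r s = 2 ∧ M r t = 2 ∧ M s t = 0 ∧ 0 < ψ (cs.simple r) := by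
  have hψ' : cs.IsWeightedLength x ψ := hψ
  simp only [hψ'.apply_simple]
  constructor
  · rintro hfin ⟨r, s, t, hrs, hrt, hst, hr⟩
    refine Set.infinite_of_injective_forall_mem (cs.injective_pow_simple_mul_simple hra hst)
      (fun n => ?_) (hfin r r)
    rw [Function.mem_support, hψ'.gammaFun_simple_ne_zero_iff hra]
    exact ⟨(((cs.commute_simple_of_eq_two hrs).mul_right
      (cs.commute_simple_of_eq_two hrt)).pow_right n).eq, hr.ne'⟩
  · intro hno u w
    by_cases hw : x w = 0
    · simp [Function.support, hψ'.gammaFun_simple_ne_zero_iff hra, hw]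
    refine (cs.finite_setOf_simple_mul_eq_mul_simple hra fun p q hp hq hpq => ?_).subset
      fun v hv => ((hψ'.gammaFun_simple_ne_zero_iff hra).mp hv).1
    exact (hra p q hpq).resolve_right fun h0 => hno ⟨w, p, q, hp, hq, h0, (hx w).lt_of_ne' hw⟩

/-- Let `W = ⟨S|M⟩` be a right-angled finite rank Coxeter system (all off-diagonal labels
are `2` or `∞`, the latter encoded by `0`), let `x : S → [0,∞)` be weights and let `ψ_x` be
the weighted word length, `ψ_x(w) = Σ_i x_i·#{l : w_l = s_i}` for a reduced expression
`w = w_1⋯w_k`.  Suppose `ψ_x` is proper.  Then: all functions `γ_{u,w}^{ψ_x}` (`u, w ∈ S`)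
have finite support if and only if there are no generators `r, s, t ∈ S` with
`m_{r,s} = m_{r,t} = 2`, `m_{s,t} = ∞` and `ψ_x(r) > 0`. -/
theorem rightAngled_gamma_finite_support_iff
    {B : Type*} [Fintype B] [DecidableEq B] {M : CoxeterMatrix B}
    {W : Type*} [Group W] (cs : CoxeterSystem M W)
    (hra : ∀ i j : B, i ≠ j → M i j = 2 ∨ M i j = 0)
    (x : B → ℝ) (hx : ∀ i : B, 0 ≤ x i)
    (ψ : W → ℝ)
    (hψ : ∀ ω : List B, cs.IsReduced ω →
      ψ (cs.wordProd ω) = ∑ i : B, x i * (ω.count i : ℝ))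
    (hproper : ∀ N : ℝ, {w : W | ψ w ≤ N}.Finite) :
    (∀ u w : B,
        (Function.support (gammaFun ψ (cs.simple u) (cs.simple w))).Finite) ↔
      ¬ ∃ r s t : B, M r s = 2 ∧ M r t = 2 ∧ M s t = 0 ∧ 0 < ψ (cs.simple r) :=
  rightAngled_gamma_finite_support_iff_general cs hra x hx ψ hψ
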